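/- Let n ≥ 1 and let α, β ∈ ℂ be such that α+β is not a nonpositive integer and α ∉ {1−k : 1 ≤ k ≤ n−1} and α+β ∉ {1−k : 1 ≤ k ≤ n−1}. Then for every p = (p₁,…,p_n) ∈ ℂⁿ and every r ∈ (0,1): det( ₂F₁(α, β+p_i+j ; α+β ; 1−r²) )_{1≤i,j≤n} = (−1)^{n(n−1)/2}·(1−r²)^{n(n−1)/2}·∏_{k=1}^{n−1} ( (α+k−1)/(α+β+k−1) )^{n−k} · det( ₂F₁(α+n−j, β+p_i+n ; α+β+n−j ; 1−r²) )_{1≤i,j≤n}. -/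

import Mathlib

/-!
Write `x = 1 - r²`, so `‖x‖ < 1`. Gauss' contiguous relation
`₂F₁(a, b+1; c; x) - ₂F₁(a, b; c; x) = (a x / c) ₂F₁(a+1, b+1; c+1; x)` says that a forward
difference in `b` raises all three parameters by one at the cost of the factor `a x / c`.
Replacing column `j` by its `(n-1-j)`-th forward difference (taken along the column index) is a
triangular column operation with diagonal entries `±1`, so it changes the determinant by
`(-1)^(n(n-1)/2)` only. Afterwards column `j` is `∏_{k < n-1-j} (α+k) x / (α+β+k)` times
`₂F₁(α+n-1-j, β+p_i+n; α+β+n-1-j; x)`, and pulling these factors out of the columns gives the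
identity.
-/

open MeasureTheory Complex Matrix Filter
open scoped ENNReal Real ComplexOrder

noncomputable section

/-- The Pochhammer symbol `(a)_k = a(a+1)⋯(a+k−1)`. -/
def poch (a : ℂ) (k : ℕ) : ℂ := ∏ i ∈ Finset.range k, (a + (i : ℂ))

/-- The Gauss hypergeometric series `₂F₁(a,b;c;x)`. -/
def hyp2F1 (a b c x : ℂ) : ℂ :=
  ∑' k : ℕ, poch a k * poch b k / (poch c k * (Nat.factorial k : ℂ)) * x ^ k

/-- `ε(k) = 1` if `k ≥ 0`, `−1` if `k < 0`. -/
def epsZ (k : ℤ) : ℤ := if 0 ≤ k then 1 else -1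

/-- The radial function `φ^ν_{λ,k}(r)`. -/
def phiNu (n : ℕ) (ν : ℤ) (l : ℂ) (k : ℤ) (r : ℝ) : ℂ :=
  (r : ℂ) ^ k.natAbs * ((1 - (r : ℂ) ^ 2) ^ ((Complex.I * l + (n : ℂ) - (ν : ℂ)) / 2))
    * (poch ((Complex.I * l + (n : ℂ) + ((epsZ k * ν : ℤ) : ℂ)) / 2) k.natAbs
        / (Nat.factorial k.natAbs : ℂ))
    * hyp2F1 ((Complex.I * l + (n : ℂ) - ((epsZ k * ν : ℤ) : ℂ)) / 2)
        ((Complex.I * l + (n : ℂ) + ((epsZ k * ν : ℤ) : ℂ)) / 2 + (k.natAbs : ℂ))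
        (1 + (k.natAbs : ℂ)) ((r : ℂ) ^ 2)

/-- `d_m = ∏_{i<j} (1 + (m_i − m_j)/(j − i))`. -/
def dSig (n : ℕ) (m : Fin n → ℤ) : ℝ :=
  ∏ q ∈ Finset.univ.filter (fun q : Fin n × Fin n => q.1 < q.2),
    (1 + ((m q.1 - m q.2 : ℤ) : ℝ) / ((q.2 : ℕ) - (q.1 : ℕ) : ℝ))

/-- The generalized spherical function `Φ^ν_{λ,m}(r)`. -/
def PhiSph (n : ℕ) (ν : ℤ) (l : ℂ) (m : Fin n → ℤ) (r : ℝ) : ℂ :=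
  ((Nat.factorial n : ℂ) / (dSig n m : ℂ))
    * Matrix.det (Matrix.of fun i j : Fin n => phiNu n ν l (m i - (i : ℕ) + (j : ℕ)) r)

open Finset Nat Matrix

lemma sum_range_tsub_one_tsub (n : ℕ) : ∑ k ∈ range n, (n - 1 - k) = n * (n - 1) / 2 := by
  rw [sum_range_reflect (fun k => k), sum_range_id]

section CommMonoid

variable {M : Type*} [CommMonoid M]

lemma prod_range_prod_range_eq_prod_pow (f : ℕ → M) (n : ℕ) :
    ∏ m ∈ range n, ∏ k ∈ range m, f k = ∏ k ∈ range n, f k ^ (n - 1 - k) := by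
  induction n with
  | zero => simp
  | succ n ih =>
    rw [prod_range_succ, ih, ← prod_mul_distrib, prod_range_succ _ n, add_tsub_cancel_right,
      tsub_self, pow_zero, mul_one]
    refine prod_congr rfl fun k hk => ?_
    rw [← pow_succ, show n - 1 - k + 1 = n - k by have := mem_range.mp hk; omega]

lemma prod_Icc_pow_sub_eq_prod_range (h : ℕ → M) (n : ℕ) :
    ∏ k ∈ Icc 1 (n - 1), h k ^ (n - k) = ∏ k ∈ range n, h (k + 1) ^ (n - 1 - k) := by
  cases n with
  | zero => simp
  | succ n =>
    rw [add_tsub_cancel_right, prod_range_succ, tsub_self, pow_zero, mul_one, range_eq_Ico,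
      ← Ico_add_one_right_eq_Icc]
    simpa only [zero_add, Nat.add_sub_add_right] using
      (prod_Ico_add' (fun k => h k ^ (n + 1 - k)) 0 n 1).symm

end CommMonoid

section ForwardDifferenceColumns

variable {R : Type*} [CommRing R]

/-- Column `j` holds the coefficients of `(fwdDiff 1)^[n - 1 - j] u j` in terms of
`u j, …, u (n - 1)`, as given by `fwdDiff_iter_eq_sum_shift`. -/
def fwdDiffColOps (R : Type*) [CommRing R] (n : ℕ) : Matrix (Fin n) (Fin n) R :=
  of fun k j =>
    if (j : ℕ) ≤ k then (-1) ^ (n - 1 - (k : ℕ)) * ((n - 1 - j).choose (k - j) : R) else 0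

lemma det_fwdDiffColOps (n : ℕ) : (fwdDiffColOps R n).det = (-1) ^ (n * (n - 1) / 2) := by
  have hlower : (fwdDiffColOps R n).IsLowerTriangular := fun k j hkj =>
    if_neg (not_le.mpr (show (k : ℕ) < j from hkj))
  rw [det_of_isLowerTriangular _ hlower, ← sum_range_tsub_one_tsub,
    ← Fin.sum_univ_eq_sum_range (fun k => n - 1 - k), ← prod_pow_eq_pow_sum]
  simp [fwdDiffColOps]

lemma of_fwdDiff_iter_eq_mul_fwdDiffColOps {n : ℕ} (u : Fin n → ℕ → R) :
    of (fun i j : Fin n => (fwdDiff 1)^[n - 1 - j] (u i) j)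
      = of (fun i j : Fin n => u i j) * fwdDiffColOps R n := by
  ext i j
  rw [of_apply, fwdDiff_iter_eq_sum_shift, mul_apply]
  simp only [of_apply, fwdDiffColOps, mul_ite, mul_zero]
  rw [Fin.sum_univ_eq_sum_range (fun k => if (j : ℕ) ≤ k then
      u i k * ((-1) ^ (n - 1 - k) * ((n - 1 - j).choose (k - j) : R)) else 0),
    ← sum_range_add_sum_Ico _ j.is_le', sum_Ico_eq_sum_range,
    show n - j = n - 1 - j + 1 by omega]
  rw [sum_eq_zero fun k hk => if_neg (by simpa using hk), zero_add]
  refine sum_congr rfl fun k hk => ?_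
  rw [if_pos (Nat.le_add_right _ _), add_tsub_cancel_left, smul_one_eq_cast, zsmul_eq_mul,
    Nat.sub_sub]
  push_cast
  ring

theorem det_eq_neg_one_pow_mul_det_fwdDiff_iter {n : ℕ} (u : Fin n → ℕ → R) :
    det (of fun i j : Fin n => u i j)
      = (-1) ^ (n * (n - 1) / 2) * det (of fun i j : Fin n => (fwdDiff 1)^[n - 1 - j] (u i) j) := by
  rw [of_fwdDiff_iter_eq_mul_fwdDiffColOps, det_mul, det_fwdDiffColOps, mul_left_comm,
    ← pow_add, ← two_mul, pow_mul, neg_one_sq, one_pow, mul_one]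

end ForwardDifferenceColumns

section Hypergeometric

lemma poch_succ (a : ℂ) (k : ℕ) : poch a (k + 1) = poch a k * (a + k) :=
  prod_range_succ _ _

lemma poch_succ' (a : ℂ) (k : ℕ) : poch a (k + 1) = a * poch (a + 1) k := by
  rw [poch, prod_range_succ', mul_comm]
  push_cast
  simp only [add_zero, add_assoc, add_comm (1 : ℂ), poch]

lemma poch_eq_ascPochhammer_eval (a : ℂ) (k : ℕ) : poch a k = (ascPochhammer ℂ k).eval a := by
  induction k with
  | zero => simp [poch]
  | succ k ih => rw [poch_succ, ascPochhammer_succ_eval, ih]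

def hyp2F1Term (a b c x : ℂ) (k : ℕ) : ℂ :=
  poch a k * poch b k / (poch c k * (k ! : ℂ)) * x ^ k

lemma hyp2F1_eq_tsum (a b c x : ℂ) : hyp2F1 a b c x = ∑' k, hyp2F1Term a b c x k := rfl

variable {a b c x : ℂ}

lemma summable_hyp2F1 (hx : ‖x‖ < 1) (hc : ∀ k : ℕ, c + k ≠ 0) :
    Summable (hyp2F1Term a b c x) := by
  have hradius : 1 ≤ (ordinaryHypergeometricSeries ℂ a b c).radius := by
    by_cases ha : ∃ k : ℕ, a = -k
    · obtain ⟨k, rfl⟩ := ha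
      simp [ordinaryHypergeometric_radius_top_of_neg_nat₁]
    by_cases hb : ∃ k : ℕ, b = -k
    · obtain ⟨k, rfl⟩ := hb
      simp [ordinaryHypergeometric_radius_top_of_neg_nat₂]
    refine (ordinaryHypergeometricSeries_radius_eq_one ℂ a b c fun k => ?_).ge
    refine ⟨fun h => ha ⟨k, by rw [h, neg_neg]⟩, fun h => hb ⟨k, by rw [h, neg_neg]⟩,
      fun h => hc k (by rw [h, add_neg_cancel])⟩
  have hmem : x ∈ Metric.eball (0 : ℂ) (ordinaryHypergeometricSeries ℂ a b c).radius := by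
    refine lt_of_lt_of_le ?_ hradius
    simpa [← ofReal_norm, ENNReal.ofReal_lt_one] using hx
  refine ((ordinaryHypergeometricSeries ℂ a b c).summable hmem).congr fun k => ?_
  rw [ordinaryHypergeometricSeries_apply_eq, smul_eq_mul]
  simp only [hyp2F1Term, poch_eq_ascPochhammer_eval]
  field_simp

lemma hyp2F1Term_add_one_sub (hc : ∀ k : ℕ, c + k ≠ 0) (k : ℕ) :
    hyp2F1Term a (b + 1) c x (k + 1) - hyp2F1Term a b c x (k + 1)
      = a * x / c * hyp2F1Term (a + 1) (b + 1) (c + 1) x k := by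
  have hc0 : c ≠ 0 := by simpa using hc 0
  have hc1 : poch (c + 1) k ≠ 0 :=
    prod_ne_zero_iff.mpr fun i _ => by convert hc (i + 1) using 1; push_cast; ring
  simp only [hyp2F1Term, poch_succ' a, poch_succ (b + 1), poch_succ' b, poch_succ' c,
    factorial_succ]
  push_cast
  field_simp
  ring

lemma hyp2F1_add_one_sub (hx : ‖x‖ < 1) (hc : ∀ k : ℕ, c + k ≠ 0) :
    hyp2F1 a (b + 1) c x - hyp2F1 a b c x = a * x / c * hyp2F1 (a + 1) (b + 1) (c + 1) x := by
  have hsum₁ := summable_hyp2F1 (a := a) (b := b + 1) hx hc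
  have hsum₀ := summable_hyp2F1 (a := a) (b := b) hx hc
  rw [hyp2F1_eq_tsum, hyp2F1_eq_tsum, hyp2F1_eq_tsum, ← hsum₁.tsum_sub hsum₀,
    (hsum₁.sub hsum₀).tsum_eq_zero_add, ← tsum_mul_left]
  simp only [hyp2F1Term_add_one_sub hc]
  simp [hyp2F1Term, poch]

lemma fwdDiff_iter_hyp2F1 (hx : ‖x‖ < 1) (hc : ∀ k : ℕ, c + k ≠ 0) (m s : ℕ) :
    (fwdDiff 1)^[m] (fun s : ℕ => hyp2F1 a (b + s) c x) s
      = (∏ k ∈ range m, (a + k) * x / (c + k)) * hyp2F1 (a + m) (b + s + m) (c + m) x := by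
  induction m generalizing s with
  | zero => simp
  | succ m ih =>
    have hcm : ∀ k : ℕ, c + m + k ≠ 0 := fun k => by
      convert hc (m + k) using 1; push_cast; ring
    have hshift : b + ↑(s + 1) + m = b + s + m + 1 := by push_cast; ring
    have hsucc : ∀ z : ℂ, z + ↑(m + 1) = z + m + 1 := fun z => by push_cast; ring
    rw [Function.iterate_succ_apply', fwdDiff, ih, ih, hshift, ← mul_sub,
      hyp2F1_add_one_sub hx hcm, prod_range_succ, hsucc, hsucc, hsucc]
    ring

end Hypergeometric

lemma prod_fin_prod_range_mul_div (α β x : ℂ) (n : ℕ) :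
    ∏ j : Fin n, ∏ k ∈ range (n - 1 - j), (α + k) * x / (α + β + k)
      = x ^ (n * (n - 1) / 2)
        * ∏ k ∈ Icc 1 (n - 1), ((α + (k : ℂ) - 1) / (α + β + (k : ℂ) - 1)) ^ (n - k) := by
  calc _ = ∏ m ∈ range n, ∏ k ∈ range m, (α + k) * x / (α + β + k) := by
        rw [Fin.prod_univ_eq_prod_range
            (fun j => ∏ k ∈ range (n - 1 - j), (α + k) * x / (α + β + k)),
          prod_range_reflect (fun m => ∏ k ∈ range m, (α + k) * x / (α + β + k))]
    _ = ∏ k ∈ range n, ((α + k) * x / (α + β + k)) ^ (n - 1 - k) :=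
        prod_range_prod_range_eq_prod_pow _ n
    _ = ∏ k ∈ range n, x ^ (n - 1 - k) * ((α + k) / (α + β + k)) ^ (n - 1 - k) :=
        prod_congr rfl fun k _ => by rw [← mul_pow, mul_div_assoc, mul_div_left_comm]
    _ = _ := by
        rw [prod_mul_distrib, prod_pow_eq_pow_sum, sum_range_tsub_one_tsub,
          prod_Icc_pow_sub_eq_prod_range]
        push_cast
        simp only [← add_assoc, add_sub_cancel_right]

lemma norm_one_sub_sq_lt_one {r : ℝ} (hr : 0 < r) (hr1 : r < 1) : ‖1 - (r : ℂ) ^ 2‖ < 1 := by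
  rw [show 1 - (r : ℂ) ^ 2 = ((1 - r ^ 2 : ℝ) : ℂ) by push_cast; rfl, norm_real, Real.norm_eq_abs,
    abs_lt]
  constructor <;> nlinarith

theorem statement13_general (n : ℕ) (α β : ℂ)
    (hc : ∀ m : ℤ, m ≤ 0 → α + β ≠ (m : ℂ))
    (p : Fin n → ℂ) (r : ℝ) (hr : 0 < r) (hr1 : r < 1) :
    Matrix.det (Matrix.of fun i j : Fin n =>
        hyp2F1 α (β + p i + ((j : ℕ) : ℂ) + 1) (α + β) (1 - (r : ℂ) ^ 2))
      = (-1 : ℂ) ^ (n * (n - 1) / 2) * (1 - (r : ℂ) ^ 2) ^ (n * (n - 1) / 2)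
        * (∏ k ∈ Finset.Icc 1 (n - 1),
            ((α + (k : ℂ) - 1) / (α + β + (k : ℂ) - 1)) ^ (n - k))
        * Matrix.det (Matrix.of fun i j : Fin n =>
            hyp2F1 (α + (n : ℂ) - 1 - ((j : ℕ) : ℂ)) (β + p i + (n : ℂ))
              (α + β + (n : ℂ) - 1 - ((j : ℕ) : ℂ)) (1 - (r : ℂ) ^ 2)) := by
  set x : ℂ := 1 - (r : ℂ) ^ 2
  have hx : ‖x‖ < 1 := norm_one_sub_sq_lt_one hr hr1
  have hαβ : ∀ k : ℕ, α + β + k ≠ 0 := fun k h =>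
    hc (-(k : ℤ)) (neg_nonpos.mpr k.cast_nonneg) (by push_cast; linear_combination h)
  have hcols (i j : Fin n) :
      (fwdDiff 1)^[n - 1 - j] (fun s : ℕ => hyp2F1 α (β + p i + 1 + s) (α + β) x) j
        = (∏ k ∈ range (n - 1 - j), (α + k) * x / (α + β + k))
          * hyp2F1 (α + n - 1 - j) (β + p i + n) (α + β + n - 1 - j) x := by
    have hj : ((n - 1 - j : ℕ) : ℂ) = n - 1 - j := by
      have := j.isLt
      rw [Nat.cast_sub (by omega), Nat.cast_sub (by omega), Nat.cast_one]
    rw [fwdDiff_iter_hyp2F1 hx hαβ, hj]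
    congr 2 <;> ring
  calc _ = det (of fun i j : Fin n => hyp2F1 α (β + p i + 1 + (j : ℕ)) (α + β) x) := by
        simp only [add_right_comm _ _ (1 : ℂ)]
    _ = _ := det_eq_neg_one_pow_mul_det_fwdDiff_iter fun i s => hyp2F1 α (β + p i + 1 + s) (α + β) x
    _ = (-1) ^ (n * (n - 1) / 2)
          * ((∏ j : Fin n, ∏ k ∈ range (n - 1 - j), (α + k) * x / (α + β + k))
            * det (of fun i j : Fin n =>
              hyp2F1 (α + n - 1 - j) (β + p i + n) (α + β + n - 1 - j) x)) := by
        rw [← det_mul_row]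
        simp only [hcols, of_apply]
    _ = _ := by
        rw [prod_fin_prod_range_mul_div]
        ring

/-- Lemma A: column-reduction identity for determinants of hypergeometric functions. -/
theorem statement13 (n : ℕ) (hn : 1 ≤ n) (α β : ℂ)
    (hc : ∀ m : ℤ, m ≤ 0 → α + β ≠ (m : ℂ))
    (hα : ∀ k : ℕ, 1 ≤ k → k ≤ n - 1 → α ≠ 1 - (k : ℂ))
    (hαβ : ∀ k : ℕ, 1 ≤ k → k ≤ n - 1 → α + β ≠ 1 - (k : ℂ))
    (p : Fin n → ℂ) (r : ℝ) (hr : 0 < r) (hr1 : r < 1) :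
    Matrix.det (Matrix.of fun i j : Fin n =>
        hyp2F1 α (β + p i + ((j : ℕ) : ℂ) + 1) (α + β) (1 - (r : ℂ) ^ 2))
      = (-1 : ℂ) ^ (n * (n - 1) / 2) * (1 - (r : ℂ) ^ 2) ^ (n * (n - 1) / 2)
        * (∏ k ∈ Finset.Icc 1 (n - 1),
            ((α + (k : ℂ) - 1) / (α + β + (k : ℂ) - 1)) ^ (n - k))
        * Matrix.det (Matrix.of fun i j : Fin n =>
            hyp2F1 (α + (n : ℂ) - 1 - ((j : ℕ) : ℂ)) (β + p i + (n : ℂ))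
              (α + β + (n : ℂ) - 1 - ((j : ℕ) : ℂ)) (1 - (r : ℂ) ^ 2)) :=
  statement13_general n α β hc p r hr hr1
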